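/- arXiv:1603.03721 — 3 statements merged into one kernel-verified Lean document; each statement's English description precedes it below -/
import Mathlib

section
/- If ζ₁ and ζ₂ are both twice continuously differentiable functions on [−ℓ,ℓ] solving the equilibrium capillary problem with the same pressure P ∈ ℝ, then ζ₁(x) = ζ₂(x) for all x ∈ [−ℓ,ℓ]. -/
/-!
Let `u = ζ₁ - ζ₂` and `v = F(ζ₁') - F(ζ₂')` with `F t = t / √(1 + t²)`, so that the equation
gives `σ v' = g u` in the interior and the contact-angle conditions give `v(±ℓ) = 0`. Then
`σ (u v)' = σ u' v + g u² ≥ 0`, since `F` is increasing. A nondecreasing function with equal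
endpoint values is constant, so `(u v)' = 0`, forcing `u = 0` inside and, by continuity, on
`[-ℓ, ℓ]`.
-/

open Set MeasureTheory

/-- One-sided derivative of a function regarded as a function on `[-ℓ, ℓ]`. -/
noncomputable def capD (ℓ : ℝ) (ζ : ℝ → ℝ) : ℝ → ℝ :=
  derivWithin ζ (Set.Icc (-ℓ) ℓ)

/-- The mean curvature operator `𝓗(ζ) = (ζ'/√(1+(ζ')²))'` on `[-ℓ, ℓ]`. -/
noncomputable def meanCurv (ℓ : ℝ) (ζ : ℝ → ℝ) : ℝ → ℝ :=
  derivWithin (fun x => capD ℓ ζ x / Real.sqrt (1 + (capD ℓ ζ x) ^ 2)) (Set.Icc (-ℓ) ℓ)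

/-- `ζ` is a twice continuously differentiable solution of the equilibrium capillary
problem on `[-ℓ, ℓ]` with pressure `P`. -/
def IsCapSol (g σ ℓ γ P : ℝ) (ζ : ℝ → ℝ) : Prop :=
  ContDiffOn ℝ 2 ζ (Set.Icc (-ℓ) ℓ) ∧
  (∀ x ∈ Set.Ioo (-ℓ) ℓ, g * ζ x - σ * meanCurv ℓ ζ x = P) ∧
  σ * capD ℓ ζ ℓ / Real.sqrt (1 + (capD ℓ ζ ℓ) ^ 2) = γ ∧
  σ * capD ℓ ζ (-ℓ) / Real.sqrt (1 + (capD ℓ ζ (-ℓ)) ^ 2) = -γ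

/-- The capillary energy functional `𝓘`, expressed in terms of a function `ζ`
and its derivative `ζ'`. -/
noncomputable def capEnergy (g σ ℓ γ : ℝ) (ζ ζ' : ℝ → ℝ) : ℝ :=
  (∫ x in (-ℓ)..ℓ, (g / 2 * ζ x ^ 2 + σ * Real.sqrt (1 + ζ' x ^ 2))) -
    γ * (ζ ℓ + ζ (-ℓ))

/-- `ψ ∈ W^{1,1}((-ℓ,ℓ))` with weak derivative `ψ'`. -/
def IsW11 (ℓ : ℝ) (ψ ψ' : ℝ → ℝ) : Prop :=
  MeasureTheory.IntegrableOn ψ' (Set.Ioo (-ℓ) ℓ) ∧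
  ∀ x ∈ Set.Icc (-ℓ) ℓ, ψ x = ψ (-ℓ) + ∫ t in (-ℓ)..x, ψ' t

lemma Monotone.sub_mul_sub_nonneg {α : Type*} [Ring α] [LinearOrder α] [IsStrictOrderedRing α]
    {f : α → α} (hf : Monotone f) (a b : α) :
    0 ≤ (a - b) * (f a - f b) := by
  rcases le_total a b with hab | hab
  · exact mul_nonneg_of_nonpos_of_nonpos (sub_nonpos.2 hab) (sub_nonpos.2 (hf hab))
  · exact mul_nonneg (sub_nonneg.2 hab) (sub_nonneg.2 (hf hab))

lemma eq_zero_of_hasDerivAt_of_nonneg_of_endpoints_eq {f f' : ℝ → ℝ} {a b : ℝ}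
    (hf : ContinuousOn f (Icc a b)) (hderiv : ∀ x ∈ Ioo a b, HasDerivAt f (f' x) x)
    (hnonneg : ∀ x ∈ Ioo a b, 0 ≤ f' x) (hab : f a = f b) :
    ∀ x ∈ Ioo a b, f' x = 0 := by
  intro x hx
  have hmono : MonotoneOn f (Icc a b) := by
    refine monotoneOn_of_hasDerivWithinAt_nonneg (f' := f') (convex_Icc a b) hf ?_ ?_ <;>
      rw [interior_Icc]
    · exact fun y hy => (hderiv y hy).hasDerivWithinAt
    · exact hnonneg
  have hconst : ∀ y ∈ Icc a b, f y = f a := fun y hy =>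
    le_antisymm (hab ▸ hmono hy (right_mem_Icc.2 (hy.1.trans hy.2)) hy.2)
      (hmono (left_mem_Icc.2 (hy.1.trans hy.2)) hy hy.1)
  have hzero : HasDerivAt f 0 x :=
    (hasDerivAt_const x (f a)).congr_of_eventuallyEq
      (Filter.eventually_of_mem (Icc_mem_nhds hx.1 hx.2) hconst)
  exact (hderiv x hx).unique hzero

/-- `meanCurv ℓ ζ` is definitionally the derivative within `[-ℓ, ℓ]` of
`normalizedSlope ∘ capD ℓ ζ`. -/
noncomputable def normalizedSlope (t : ℝ) : ℝ := t / √(1 + t ^ 2)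

lemma normalizedSlope_eq_sin_arctan : normalizedSlope = Real.sin ∘ Real.arctan :=
  funext fun t => (Real.sin_arctan t).symm

lemma normalizedSlope_strictMono : StrictMono normalizedSlope := by
  intro a b hab
  rw [normalizedSlope_eq_sin_arctan]
  exact Real.strictMonoOn_sin (mem_Icc_of_Ioo (Real.arctan_mem_Ioo a))
    (mem_Icc_of_Ioo (Real.arctan_mem_Ioo b)) (Real.arctan_strictMono hab)

lemma normalizedSlope_contDiff {n : WithTop ℕ∞} : ContDiff ℝ n normalizedSlope := by
  rw [normalizedSlope_eq_sin_arctan]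
  exact Real.contDiff_sin.comp Real.contDiff_arctan

lemma ContDiffOn.hasDerivAt_derivWithin {n : WithTop ℕ∞} {f : ℝ → ℝ} {s : Set ℝ} {x : ℝ}
    (hf : ContDiffOn ℝ n f s) (hn : n ≠ 0) (hs : s ∈ nhds x) :
    HasDerivAt f (derivWithin f s x) x := by
  rw [derivWithin_of_mem_nhds hs]
  exact ((hf.differentiableOn hn).differentiableAt hs).hasDerivAt

namespace IsCapSol

variable {g σ ℓ γ P : ℝ} {ζ : ℝ → ℝ}

lemma contDiffOn_capD (h : IsCapSol g σ ℓ γ P ζ) (hℓ : 0 < ℓ) :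
    ContDiffOn ℝ 1 (capD ℓ ζ) (Icc (-ℓ) ℓ) :=
  h.1.derivWithin (uniqueDiffOn_Icc (by linarith)) (by norm_num)

lemma continuousOn_normalizedSlope_capD (h : IsCapSol g σ ℓ γ P ζ) (hℓ : 0 < ℓ) :
    ContinuousOn (normalizedSlope ∘ capD ℓ ζ) (Icc (-ℓ) ℓ) :=
  (normalizedSlope_contDiff.comp_contDiffOn (h.contDiffOn_capD hℓ)).continuousOn

lemma hasDerivAt (h : IsCapSol g σ ℓ γ P ζ) {x : ℝ} (hx : x ∈ Ioo (-ℓ) ℓ) :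
    HasDerivAt ζ (capD ℓ ζ x) x :=
  h.1.hasDerivAt_derivWithin (by norm_num) (Icc_mem_nhds hx.1 hx.2)

lemma hasDerivAt_normalizedSlope_capD (h : IsCapSol g σ ℓ γ P ζ) (hℓ : 0 < ℓ) {x : ℝ}
    (hx : x ∈ Ioo (-ℓ) ℓ) : HasDerivAt (normalizedSlope ∘ capD ℓ ζ) (meanCurv ℓ ζ x) x :=
  (normalizedSlope_contDiff.comp_contDiffOn (h.contDiffOn_capD hℓ)).hasDerivAt_derivWithin
    (by norm_num) (Icc_mem_nhds hx.1 hx.2)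

lemma normalizedSlope_capD_right (h : IsCapSol g σ ℓ γ P ζ) (hσ : σ ≠ 0) :
    normalizedSlope (capD ℓ ζ ℓ) = γ / σ := by
  rw [eq_div_iff hσ, ← h.2.2.1, normalizedSlope]
  ring

lemma normalizedSlope_capD_left (h : IsCapSol g σ ℓ γ P ζ) (hσ : σ ≠ 0) :
    normalizedSlope (capD ℓ ζ (-ℓ)) = -γ / σ := by
  rw [eq_div_iff hσ, ← h.2.2.2, normalizedSlope]
  ring

lemma eqOn_Ioo {ζ₁ ζ₂ : ℝ → ℝ} (hg : 0 < g) (hσ : 0 < σ) (hℓ : 0 < ℓ)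
    (h₁ : IsCapSol g σ ℓ γ P ζ₁) (h₂ : IsCapSol g σ ℓ γ P ζ₂) :
    EqOn ζ₁ ζ₂ (Ioo (-ℓ) ℓ) := by
  set u := fun x => ζ₁ x - ζ₂ x
  set u' := fun x => capD ℓ ζ₁ x - capD ℓ ζ₂ x
  set v := fun x => normalizedSlope (capD ℓ ζ₁ x) - normalizedSlope (capD ℓ ζ₂ x)
  set v' := fun x => meanCurv ℓ ζ₁ x - meanCurv ℓ ζ₂ x
  have hv_eq : ∀ x ∈ Ioo (-ℓ) ℓ, σ * v' x = g * u x := fun x hx => by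
    linarith [h₁.2.1 x hx, h₂.2.1 x hx]
  have hderiv : ∀ x ∈ Ioo (-ℓ) ℓ, HasDerivAt (fun x => u x * v x) (u' x * v x + u x * v' x) x :=
    fun x hx => ((h₁.hasDerivAt hx).sub (h₂.hasDerivAt hx)).mul
      ((h₁.hasDerivAt_normalizedSlope_capD hℓ hx).sub (h₂.hasDerivAt_normalizedSlope_capD hℓ hx))
  have hslope_nonneg : ∀ x, 0 ≤ u' x * v x := fun x =>
    normalizedSlope_strictMono.monotone.sub_mul_sub_nonneg _ _
  have hsq : ∀ x ∈ Ioo (-ℓ) ℓ, σ * (u x * v' x) = g * u x ^ 2 := fun x hx => by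
    rw [mul_left_comm, hv_eq x hx]; ring
  have hsq_nonneg : ∀ x ∈ Ioo (-ℓ) ℓ, 0 ≤ u x * v' x := fun x hx =>
    nonneg_of_mul_nonneg_right (by rw [hsq x hx]; positivity) hσ
  have hcont : ContinuousOn (fun x => u x * v x) (Icc (-ℓ) ℓ) :=
    (h₁.1.continuousOn.sub h₂.1.continuousOn).mul
      ((h₁.continuousOn_normalizedSlope_capD hℓ).sub (h₂.continuousOn_normalizedSlope_capD hℓ))
  have hends : u (-ℓ) * v (-ℓ) = u ℓ * v ℓ := by
    simp only [v, h₁.normalizedSlope_capD_left hσ.ne', h₂.normalizedSlope_capD_left hσ.ne',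
      h₁.normalizedSlope_capD_right hσ.ne', h₂.normalizedSlope_capD_right hσ.ne', sub_self,
      mul_zero]
  have hzero := eq_zero_of_hasDerivAt_of_nonneg_of_endpoints_eq hcont hderiv
    (fun x hx => add_nonneg (hslope_nonneg x) (hsq_nonneg x hx)) hends
  intro x hx
  have huv' : u x * v' x = 0 := by linarith [hzero x hx, hslope_nonneg x, hsq_nonneg x hx]
  have hgu : g * u x ^ 2 = 0 := by rw [← hsq x hx, huv', mul_zero]
  exact sub_eq_zero.1 (pow_eq_zero_iff two_ne_zero |>.1 ((mul_eq_zero.1 hgu).resolve_left hg.ne'))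

end IsCapSol

/-- Uniqueness of twice continuously differentiable solutions of
the equilibrium capillary problem with a given pressure `P`. -/
theorem stmt1 (g σ ℓ γ P : ℝ) (hg : 0 < g) (hσ : 0 < σ) (hℓ : 0 < ℓ)
    (ζ₁ ζ₂ : ℝ → ℝ)
    (h₁ : IsCapSol g σ ℓ γ P ζ₁) (h₂ : IsCapSol g σ ℓ γ P ζ₂) :
    ∀ x ∈ Set.Icc (-ℓ) ℓ, ζ₁ x = ζ₂ x :=
  (IsCapSol.eqOn_Ioo hg hσ hℓ h₁ h₂).of_subset_closure h₁.1.continuousOn h₂.1.continuousOn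
    Ioo_subset_Icc_self (closure_Ioo (by linarith)).ge
end

section
/- Let a ∈ (0,1) and define h : (1,∞) → ℝ by h(r) = ∫₀^{arcsin(a)} cos(ψ)·(r − cos(ψ))^{−1/2} dψ. Then h is continuous and strictly decreasing on (1,∞), h(r) → +∞ as r → 1⁺, and h(r) → 0 as r → ∞. Consequently, for every L > 0 there exists a unique C ∈ (1,∞) such that h(C) = L. -/
open Set MeasureTheory Filter

private lemma my_sqrt_add_le {x y : ℝ} (hx : 0 ≤ x) (hy : 0 ≤ y) :
    Real.sqrt (x + y) ≤ Real.sqrt x + Real.sqrt y := by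
  have h1 : Real.sqrt (x + y) ≤ Real.sqrt ((Real.sqrt x + Real.sqrt y) ^ 2) := by
    apply Real.sqrt_le_sqrt
    nlinarith [Real.sq_sqrt hx, Real.sq_sqrt hy, Real.sqrt_nonneg x, Real.sqrt_nonneg y]
  rwa [Real.sqrt_sq (by positivity)] at h1

private lemma my_one_sub_cos_le_sq {ψ : ℝ} (h0 : 0 ≤ ψ) (hπ : ψ ≤ Real.pi) :
    1 - Real.cos ψ ≤ ψ ^ 2 := by
  have h1 : Real.cos (ψ / 2) ^ 2 = 1 / 2 + Real.cos ψ / 2 := by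
    have := Real.cos_sq (ψ / 2)
    rwa [mul_div_cancel₀ _ (two_ne_zero)] at this
  have h2 : Real.sin (ψ / 2) ^ 2 = 1 / 2 - Real.cos ψ / 2 := by
    have := Real.sin_sq_add_cos_sq (ψ / 2)
    linarith
  have h3 : Real.sin (ψ / 2) ≤ ψ / 2 := Real.sin_le (by linarith)
  have h4 : 0 ≤ Real.sin (ψ / 2) :=
    Real.sin_nonneg_of_nonneg_of_le_pi (by linarith) (by linarith [Real.pi_pos])
  nlinarith

/-- For `a ∈ (0,1)`, the function
`h(r) = ∫₀^{arcsin a} cos ψ (r - cos ψ)^{-1/2} dψ` is continuous and strictly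
decreasing on `(1,∞)`, tends to `+∞` as `r → 1⁺` and to `0` as `r → ∞`;
consequently for each `L > 0` there is a unique `C ∈ (1,∞)` with `h C = L`. -/
theorem stmt2 (a : ℝ) (ha : a ∈ Set.Ioo (0 : ℝ) 1) :
    let h : ℝ → ℝ := fun r =>
      ∫ ψ in (0 : ℝ)..(Real.arcsin a), Real.cos ψ / Real.sqrt (r - Real.cos ψ)
    ContinuousOn h (Set.Ioi (1 : ℝ)) ∧
    StrictAntiOn h (Set.Ioi (1 : ℝ)) ∧
    Filter.Tendsto h (nhdsWithin 1 (Set.Ioi (1 : ℝ))) Filter.atTop ∧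
    Filter.Tendsto h Filter.atTop (nhds 0) ∧
    ∀ L : ℝ, 0 < L → ∃! C : ℝ, C ∈ Set.Ioi (1 : ℝ) ∧ h C = L := by
  intro h
  obtain ⟨ha0, ha1⟩ := ha
  set θ := Real.arcsin a with hθdef
  have hθ0 : 0 < θ := Real.arcsin_pos.2 ha0
  have hθπ2 : θ < Real.pi / 2 := Real.arcsin_lt_pi_div_two.2 ha1
  have hπ : 0 < Real.pi := Real.pi_pos
  have hcosθ : 0 < Real.cos θ := Real.cos_pos_of_mem_Ioo ⟨by linarith, hθπ2⟩
  have hdef : ∀ r, h r = ∫ ψ in (0:ℝ)..θ, Real.cos ψ / Real.sqrt (r - Real.cos ψ) :=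
    fun r => rfl
  have hden : ∀ r : ℝ, 1 < r → ∀ ψ : ℝ, 0 < r - Real.cos ψ := by
    intro r hr ψ
    have := Real.cos_le_one ψ
    linarith
  have hcos_pos : ∀ ψ ∈ Icc (0:ℝ) θ, 0 < Real.cos ψ := fun ψ hψ =>
    Real.cos_pos_of_mem_Ioo ⟨by linarith [hψ.1], lt_of_le_of_lt hψ.2 hθπ2⟩
  have hcont_ψ : ∀ r : ℝ, 1 < r →
      Continuous (fun ψ => Real.cos ψ / Real.sqrt (r - Real.cos ψ)) := by
    intro r hr
    exact Real.continuous_cos.div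
      (Real.continuous_sqrt.comp (continuous_const.sub Real.continuous_cos))
      (fun ψ => (Real.sqrt_pos.2 (hden r hr ψ)).ne')
  -- continuity
  have hcontAt : ∀ r₀ ∈ Ioi (1:ℝ), ContinuousAt h r₀ := by
    intro r₀ hr₀
    have hr₀1 : 1 < r₀ := hr₀
    set δ : ℝ := (r₀ - 1) / 2 with hδdef
    have hδ0 : 0 < δ := by simp only [hδdef]; linarith
    have : ContinuousAt (fun r => ∫ ψ in (0:ℝ)..θ,
        Real.cos ψ / Real.sqrt (r - Real.cos ψ)) r₀ := by
      apply intervalIntegral.continuousAt_of_dominated_interval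
        (bound := fun _ => 1 / Real.sqrt δ)
      · refine Eventually.of_forall fun r => ?_
        exact (Real.measurable_cos.div
          (Real.continuous_sqrt.measurable.comp
            (measurable_const.sub Real.measurable_cos))).aestronglyMeasurable
      · filter_upwards [eventually_gt_nhds (show 1 + δ < r₀ by simp only [hδdef]; linarith)]
          with r hr
        refine Eventually.of_forall fun ψ _ => ?_
        rw [Real.norm_eq_abs, abs_div, abs_of_nonneg (Real.sqrt_nonneg _)]
        refine div_le_div₀ zero_le_one (Real.abs_cos_le_one ψ) (Real.sqrt_pos.2 hδ0)
          (Real.sqrt_le_sqrt ?_)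
        have := Real.cos_le_one ψ
        linarith
      · exact intervalIntegrable_const
      · refine Eventually.of_forall fun ψ _ => ?_
        exact ContinuousAt.div continuousAt_const
          (Real.continuous_sqrt.continuousAt.comp
            ((continuousAt_id.sub continuousAt_const)))
          (Real.sqrt_pos.2 (hden r₀ hr₀1 ψ)).ne'
    exact this
  have hcont : ContinuousOn h (Ioi (1:ℝ)) :=
    fun r hr => (hcontAt r hr).continuousWithinAt
  -- strict antitone
  have hanti : StrictAntiOn h (Ioi (1:ℝ)) := by
    intro r hr s hs hrs
    rw [hdef, hdef]
    apply intervalIntegral.integral_lt_integral_of_continuousOn_of_le_of_exists_lt hθ0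
      ((hcont_ψ s (lt_trans hr hrs)).continuousOn) ((hcont_ψ r hr).continuousOn)
    · intro ψ hψ
      have hc : 0 < Real.cos ψ := hcos_pos ψ ⟨hψ.1.le, hψ.2⟩
      exact le_of_lt (div_lt_div_of_pos_left hc (Real.sqrt_pos.2 (hden r hr ψ))
        (Real.sqrt_lt_sqrt (le_of_lt (hden r hr ψ)) (by linarith)))
    · refine ⟨θ, ⟨hθ0.le, le_refl θ⟩, ?_⟩
      exact div_lt_div_of_pos_left hcosθ (Real.sqrt_pos.2 (hden r hr θ))
        (Real.sqrt_lt_sqrt (le_of_lt (hden r hr θ)) (by linarith))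
  -- bounds
  have hlb0 : ∀ r : ℝ, 1 < r → 0 ≤ h r := by
    intro r hr
    rw [hdef]
    apply intervalIntegral.integral_nonneg hθ0.le
    intro ψ hψ
    exact div_nonneg (hcos_pos ψ hψ).le (Real.sqrt_nonneg _)
  have hub : ∀ r : ℝ, 1 < r → h r ≤ θ * (1 / Real.sqrt (r - 1)) := by
    intro r hr
    rw [hdef]
    have step : (∫ ψ in (0:ℝ)..θ, Real.cos ψ / Real.sqrt (r - Real.cos ψ))
        ≤ ∫ _ in (0:ℝ)..θ, 1 / Real.sqrt (r - 1) := by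
      apply intervalIntegral.integral_mono_on hθ0.le
        ((hcont_ψ r hr).intervalIntegrable _ _) intervalIntegrable_const
      intro ψ hψ
      refine div_le_div₀ zero_le_one (Real.cos_le_one ψ)
        (Real.sqrt_pos.2 (by linarith)) (Real.sqrt_le_sqrt ?_)
      have := Real.cos_le_one ψ
      linarith
    simpa [intervalIntegral.integral_const, smul_eq_mul] using step
  -- tendsto 0 at atTop
  have htop0 : Tendsto h atTop (nhds 0) := by
    have hsq_top : Tendsto (fun r : ℝ => Real.sqrt (r - 1)) atTop atTop := by
      refine tendsto_atTop.2 fun b => ?_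
      filter_upwards [eventually_ge_atTop (b ^ 2 + 1)] with r hr
      calc b ≤ |b| := le_abs_self b
        _ = Real.sqrt (b ^ 2) := (Real.sqrt_sq_eq_abs b).symm
        _ ≤ Real.sqrt (r - 1) := Real.sqrt_le_sqrt (by linarith)
    have hup : Tendsto (fun r : ℝ => θ * (1 / Real.sqrt (r - 1))) atTop (nhds 0) := by
      have := (tendsto_const_nhds (x := θ) (f := atTop)).div_atTop hsq_top
      simpa [div_eq_mul_inv, one_div] using this
    refine tendsto_of_tendsto_of_tendsto_of_le_of_le' tendsto_const_nhds hup ?_ ?_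
    · filter_upwards [eventually_gt_atTop (1:ℝ)] with r hr using hlb0 r hr
    · filter_upwards [eventually_gt_atTop (1:ℝ)] with r hr using hub r hr
  -- lower bound near 1
  have key : ∀ r : ℝ, 1 < r →
      Real.cos θ * (Real.log (θ + Real.sqrt (r - 1)) - Real.log (Real.sqrt (r - 1)))
        ≤ h r := by
    intro r hr
    set s : ℝ := Real.sqrt (r - 1) with hsdef
    have hs0 : 0 < s := Real.sqrt_pos.2 (by linarith)
    have hmono : ∀ ψ ∈ Icc (0:ℝ) θ,
        Real.cos θ * (ψ + s)⁻¹ ≤ Real.cos ψ / Real.sqrt (r - Real.cos ψ) := by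
      intro ψ hψ
      have h1 : Real.cos θ ≤ Real.cos ψ :=
        Real.cos_le_cos_of_nonneg_of_le_pi hψ.1 (by linarith) hψ.2
      have h2 : Real.sqrt (r - Real.cos ψ) ≤ ψ + s := by
        have hψsq : 1 - Real.cos ψ ≤ ψ ^ 2 :=
          my_one_sub_cos_le_sq hψ.1 (by linarith [hψ.2])
        calc Real.sqrt (r - Real.cos ψ)
            ≤ Real.sqrt ((r - 1) + ψ ^ 2) := Real.sqrt_le_sqrt (by linarith)
          _ ≤ Real.sqrt (r - 1) + Real.sqrt (ψ ^ 2) :=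
              my_sqrt_add_le (by linarith) (sq_nonneg _)
          _ = s + ψ := by rw [Real.sqrt_sq hψ.1]
          _ = ψ + s := add_comm _ _
      calc Real.cos θ * (ψ + s)⁻¹ = Real.cos θ / (ψ + s) := by rw [div_eq_mul_inv]
        _ ≤ Real.cos ψ / Real.sqrt (r - Real.cos ψ) :=
            div_le_div₀ (hcos_pos ψ hψ).le h1 (Real.sqrt_pos.2 (hden r hr ψ)) h2
    have hcont_lb : ContinuousOn (fun ψ : ℝ => Real.cos θ * (ψ + s)⁻¹) (uIcc 0 θ) := by
      refine continuousOn_const.mul (ContinuousOn.inv₀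
        ((continuous_id.add continuous_const).continuousOn) ?_)
      intro ψ hψ
      rw [uIcc_of_le hθ0.le] at hψ
      have := hψ.1
      positivity
    have hint : (∫ ψ in (0:ℝ)..θ, Real.cos θ * (ψ + s)⁻¹) ≤ h r := by
      rw [hdef]
      exact intervalIntegral.integral_mono_on hθ0.le
        (hcont_lb.intervalIntegrable) ((hcont_ψ r hr).intervalIntegrable _ _) hmono
    have hval : (∫ ψ in (0:ℝ)..θ, Real.cos θ * (ψ + s)⁻¹)
        = Real.cos θ * (Real.log (θ + s) - Real.log s) := by
      rw [intervalIntegral.integral_const_mul]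
      congr 1
      have := intervalIntegral.integral_comp_add_right (a := (0:ℝ)) (b := θ)
        (fun x : ℝ => x⁻¹) s
      rw [show (fun ψ : ℝ => (ψ + s)⁻¹) = fun ψ : ℝ => (ψ + s)⁻¹ from rfl, this,
        zero_add, integral_inv_of_pos hs0 (by linarith),
        Real.log_div (by linarith) hs0.ne']
    linarith [hint, hval.symm.le]
  -- tendsto atTop at 1⁺
  have h1top : Tendsto h (nhdsWithin 1 (Ioi (1:ℝ))) atTop := by
    have hsq : Tendsto (fun r : ℝ => Real.sqrt (r - 1)) (nhdsWithin 1 (Ioi 1))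
        (nhdsWithin 0 (Ioi 0)) := by
      apply tendsto_nhdsWithin_of_tendsto_nhds_of_eventually_within
      · have hc : Tendsto (fun r : ℝ => Real.sqrt (r - 1)) (nhds 1) (nhds 0) := by
          have hcc : Continuous fun r : ℝ => Real.sqrt (r - 1) :=
            Real.continuous_sqrt.comp (continuous_id.sub continuous_const)
          have := hcc.tendsto (1:ℝ)
          simpa using this
        exact hc.mono_left nhdsWithin_le_nhds
      · filter_upwards [self_mem_nhdsWithin] with r hr
        exact Real.sqrt_pos.2 (by simpa [sub_pos] using hr)
    have hlog1 : Tendsto (fun r : ℝ => Real.log (Real.sqrt (r - 1)))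
        (nhdsWithin 1 (Ioi 1)) atBot := Real.tendsto_log_nhdsGT_zero.comp hsq
    have hlog2 : Tendsto (fun r : ℝ => Real.log (θ + Real.sqrt (r - 1)))
        (nhdsWithin 1 (Ioi 1)) (nhds (Real.log θ)) := by
      have h0 : Tendsto (fun r : ℝ => θ + Real.sqrt (r - 1)) (nhdsWithin 1 (Ioi 1))
          (nhds θ) := by
        have := tendsto_const_nhds (x := θ) (f := nhdsWithin (1:ℝ) (Ioi 1)) |>.add
          (hsq.mono_right nhdsWithin_le_nhds)
        simpa using this
      exact ((Real.continuousAt_log hθ0.ne').tendsto).comp h0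
    have hdiff : Tendsto (fun r : ℝ => Real.log (θ + Real.sqrt (r - 1))
        - Real.log (Real.sqrt (r - 1))) (nhdsWithin 1 (Ioi 1)) atTop := by
      have hneg : Tendsto (fun r : ℝ => -Real.log (Real.sqrt (r - 1)))
          (nhdsWithin 1 (Ioi 1)) atTop := tendsto_neg_atBot_atTop.comp hlog1
      have := hlog2.add_atTop hneg
      simpa [sub_eq_add_neg] using this
    have hmul : Tendsto (fun r : ℝ => Real.cos θ * (Real.log (θ + Real.sqrt (r - 1))
        - Real.log (Real.sqrt (r - 1)))) (nhdsWithin 1 (Ioi 1)) atTop :=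
      Tendsto.const_mul_atTop hcosθ hdiff
    apply tendsto_atTop_mono' _ _ hmul
    filter_upwards [self_mem_nhdsWithin] with r hr
    exact key r hr
  -- conclusion
  refine ⟨hcont, hanti, h1top, htop0, ?_⟩
  intro L hL
  obtain ⟨r₁, hr₁L, hr₁mem⟩ : ∃ r₁, L < h r₁ ∧ r₁ ∈ Ioi (1:ℝ) := by
    have := (h1top.eventually (eventually_gt_atTop L)).and self_mem_nhdsWithin
    exact this.exists
  obtain ⟨r₂, hr₂L, hr₂gt⟩ : ∃ r₂, h r₂ < L ∧ r₁ < r₂ := by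
    have h1 := htop0.eventually (eventually_lt_nhds hL)
    have h2 := eventually_gt_atTop r₁
    exact (h1.and h2).exists
  have hr₁1 : (1:ℝ) < r₁ := hr₁mem
  have hr₂1 : (1:ℝ) < r₂ := lt_trans hr₁1 hr₂gt
  have hIcc : Icc r₁ r₂ ⊆ Ioi (1:ℝ) := fun x hx => lt_of_lt_of_le hr₁1 hx.1
  obtain ⟨C, hCmem, hCval⟩ := intermediate_value_Icc' hr₂gt.le (hcont.mono hIcc)
    ⟨hr₂L.le, hr₁L.le⟩
  have hC1 : C ∈ Ioi (1:ℝ) := hIcc hCmem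
  refine ⟨C, ⟨hC1, hCval⟩, ?_⟩
  intro C' hC'
  exact hanti.injOn hC'.1 hC1 (hC'.2.trans hCval.symm)
end

section
/- Suppose ζ₀ : [−ℓ,ℓ] → ℝ is twice continuously differentiable and solves the equilibrium capillary problem with some pressure P₀ ∈ ℝ, and set M_top = ∫_{−ℓ}^{ℓ} ζ₀(x) dx. Then for every η ∈ W^{1,1}((−ℓ,ℓ)) with ∫_{−ℓ}^{ℓ} η(x) dx = M_top, one has 𝓘(ζ₀) ≤ 𝓘(η). -/
open Set MeasureTheory

/-!
The energy density `(g/2) z² + σ √(1 + p²)` is convex in `(z, p)`, so `𝓘(η) - 𝓘(ζ₀)` is bounded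
below by the first variation of `𝓘` at `ζ₀` in the direction `φ = η - ζ₀`. Since `φ` is absolutely
continuous we may integrate by parts; together with `g ζ₀ - σ 𝓗(ζ₀) = P₀` this turns the first
variation into `P₀ ∫ φ` plus boundary terms. The former vanishes because `η` and `ζ₀` have the same
mass, and the contact-angle conditions make the latter equal to `⟦γ⟧ (φ(ℓ) + φ(-ℓ))`, which is
exactly the change of the wetting term.
-/

-- `meanCurv ℓ ζ` is by definition the derivative of `fun x => sinOfSlope (capD ℓ ζ x)`.
noncomputable def sinOfSlope (p : ℝ) : ℝ := p / √(1 + p ^ 2)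

theorem contDiff_sinOfSlope {n : WithTop ℕ∞} : ContDiff ℝ n sinOfSlope :=
  contDiff_id.div ((contDiff_const.add (contDiff_id.pow 2)).sqrt fun p => by positivity)
    fun p => by positivity

theorem sqrt_one_add_sq_add_sinOfSlope_mul_le (p q : ℝ) :
    √(1 + p ^ 2) + sinOfSlope p * (q - p) ≤ √(1 + q ^ 2) := by
  have hp : 0 < √(1 + p ^ 2) := by positivity
  -- Cauchy–Schwarz for the vectors `(1, p)` and `(1, q)`
  have hcs : 1 + p * q ≤ √(1 + p ^ 2) * √(1 + q ^ 2) := by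
    rw [← Real.sqrt_mul (by positivity)]
    exact (le_abs_self _).trans (Real.abs_le_sqrt (by nlinarith [sq_nonneg (p - q)]))
  rw [sinOfSlope, div_mul_eq_mul_div, ← le_sub_iff_add_le', div_le_iff₀ hp]
  nlinarith [Real.mul_self_sqrt (show 0 ≤ 1 + p ^ 2 by positivity)]

theorem energyDensity_add_variation_le {g σ : ℝ} (hg : 0 ≤ g) (hσ : 0 ≤ σ) (z p y q : ℝ) :
    g / 2 * z ^ 2 + σ * √(1 + p ^ 2) + (g * z * (y - z) + σ * (sinOfSlope p * (q - p))) ≤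
      g / 2 * y ^ 2 + σ * √(1 + q ^ 2) := by
  nlinarith [mul_nonneg hg (sq_nonneg (y - z)),
    mul_le_mul_of_nonneg_left (sqrt_one_add_sq_add_sinOfSlope_mul_le p q) hσ]

theorem intervalIntegral.integral_mul_eq_sub_integral_derivWithin_mul {a b : ℝ} (hab : a ≤ b)
    {u u' v : ℝ → ℝ} (hv : ContDiffOn ℝ 1 v (Icc a b)) (hu' : IntervalIntegrable u' volume a b)
    (hu : ∀ x ∈ Icc a b, u x = u a + ∫ t in a..x, u' t) :
    ∫ x in a..b, v x * u' x =
      v b * u b - v a * u a - ∫ x in a..b, derivWithin v (Icc a b) x * u x := by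
  set ψ : ℝ → ℝ := fun x => u a + ∫ t in a..x, u' t
  have hψ : AbsolutelyContinuousOnInterval ψ a b :=
    (contDiffOn_const (𝕜 := ℝ) (n := 1) (s := uIcc a b)).absolutelyContinuousOnInterval.fun_add
      (hu'.absolutelyContinuousOnInterval_intervalIntegral left_mem_uIcc)
  have hparts :=
    (uIcc_of_le hab ▸ hv).absolutelyContinuousOnInterval.integral_mul_deriv_eq_deriv_mul hψ
  have hderiv_ψ : ∫ x in a..b, v x * u' x = ∫ x in a..b, v x * deriv ψ x := by
    refine intervalIntegral.integral_congr_ae ?_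
    filter_upwards [hu'.ae_hasDerivAt_integral] with x hx hxab
    rw [((hx (uIoc_subset_uIcc hxab) a left_mem_uIcc).const_add (u a)).deriv]
  have hderiv_v : ∫ x in a..b, derivWithin v (Icc a b) x * u x =
      ∫ x in a..b, deriv v x * ψ x := by
    refine intervalIntegral.integral_congr_ae ?_
    filter_upwards [volume.ae_ne b] with x hxb hxab
    rw [uIoc_of_le hab] at hxab
    rw [derivWithin_of_mem_nhds (Icc_mem_nhds hxab.1 (lt_of_le_of_ne hxab.2 hxb)),
      hu x (Ioc_subset_Icc_self hxab)]
  rw [hderiv_ψ, hderiv_v, hparts, hu a (left_mem_Icc.2 hab), hu b (right_mem_Icc.2 hab)]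

theorem IntervalIntegrable.sqrt_one_add_sq {f : ℝ → ℝ} {a b : ℝ}
    (hf : IntervalIntegrable f volume a b) :
    IntervalIntegrable (fun x => √(1 + f x ^ 2)) volume a b := by
  refine ((intervalIntegrable_const (c := (1 : ℝ))).add hf.norm).mono_fun
    ((by fun_prop : Continuous fun t : ℝ => √(1 + t ^ 2)).comp_aestronglyMeasurable
      hf.def'.aestronglyMeasurable)
    (Filter.Eventually.of_forall fun x => ?_)
  simp only [Real.norm_eq_abs, abs_of_nonneg (Real.sqrt_nonneg _),
    abs_of_nonneg (by positivity : 0 ≤ 1 + |f x|)]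
  rw [Real.sqrt_le_left (by positivity)]
  nlinarith [abs_nonneg (f x), sq_abs (f x)]

namespace IsW11

variable {ℓ : ℝ} {ψ ψ' : ℝ → ℝ}

theorem intervalIntegrable (hℓ : 0 ≤ ℓ) (hψ : IsW11 ℓ ψ ψ') :
    IntervalIntegrable ψ' volume (-ℓ) ℓ :=
  (intervalIntegrable_iff_integrableOn_Ioo_of_le (by linarith)).2 hψ.1

theorem continuousOn (hℓ : 0 ≤ ℓ) (hψ : IsW11 ℓ ψ ψ') : ContinuousOn ψ (Icc (-ℓ) ℓ) := by
  have hprim := ((hψ.intervalIntegrable hℓ).absolutelyContinuousOnInterval_intervalIntegral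
    left_mem_uIcc).continuousOn
  rw [uIcc_of_le (by linarith)] at hprim
  exact (continuousOn_const.add hprim).congr hψ.2

theorem sub {φ φ' : ℝ → ℝ} (hψ : IsW11 ℓ ψ ψ') (hφ : IsW11 ℓ φ φ') :
    IsW11 ℓ (ψ - φ) (ψ' - φ') := by
  refine ⟨hψ.1.sub hφ.1, fun x hx => ?_⟩
  have hℓ : 0 ≤ ℓ := by linarith [hx.1, hx.2]
  have hsub : uIcc (-ℓ) x ⊆ uIcc (-ℓ) ℓ := uIcc_subset_uIcc_left (Icc_subset_uIcc hx)
  change ψ x - φ x = ψ (-ℓ) - φ (-ℓ) + ∫ t in (-ℓ)..x, (ψ' t - φ' t)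
  rw [hψ.2 x hx, hφ.2 x hx, intervalIntegral.integral_sub
    ((hψ.intervalIntegrable hℓ).mono_set hsub) ((hφ.intervalIntegrable hℓ).mono_set hsub)]
  ring

theorem intervalIntegrable_mul_deriv (hℓ : 0 ≤ ℓ) (hψ : IsW11 ℓ ψ ψ') {v : ℝ → ℝ}
    (hv : ContinuousOn v (Icc (-ℓ) ℓ)) :
    IntervalIntegrable (fun x => v x * ψ' x) volume (-ℓ) ℓ :=
  (hψ.intervalIntegrable hℓ).continuousOn_mul (uIcc_of_le (show -ℓ ≤ ℓ by linarith) ▸ hv)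

theorem intervalIntegrable_energyDensity (hℓ : 0 ≤ ℓ) (hψ : IsW11 ℓ ψ ψ') (g σ : ℝ) :
    IntervalIntegrable (fun x => g / 2 * ψ x ^ 2 + σ * √(1 + ψ' x ^ 2)) volume (-ℓ) ℓ :=
  ((continuousOn_const.mul ((hψ.continuousOn hℓ).pow 2)).intervalIntegrable_of_Icc
    (by linarith)).add ((hψ.intervalIntegrable hℓ).sqrt_one_add_sq.const_mul σ)

end IsW11

theorem ContDiffOn.isW11 {ℓ : ℝ} {ζ : ℝ → ℝ} (hℓ : 0 < ℓ) (hζ : ContDiffOn ℝ 1 ζ (Icc (-ℓ) ℓ)) :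
    IsW11 ℓ ζ (capD ℓ ζ) := by
  have hcont : ContinuousOn (capD ℓ ζ) (Icc (-ℓ) ℓ) :=
    hζ.continuousOn_derivWithin (uniqueDiffOn_Icc (by linarith)) le_rfl
  refine ⟨hcont.integrableOn_Icc.mono_set Ioo_subset_Icc_self, fun x hx => ?_⟩
  have hsub : Icc (-ℓ) x ⊆ Icc (-ℓ) ℓ := Icc_subset_Icc_right hx.2
  rw [capD, intervalIntegral.integral_eq_sub_of_hasDerivAt_of_le hx.1 (hζ.continuousOn.mono hsub)
    (fun t ht => (hζ.differentiableOn one_ne_zero t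
      (hsub (Ioo_subset_Icc_self ht))).hasDerivWithinAt.hasDerivAt
        (Icc_mem_nhds (by linarith [ht.1]) (by linarith [ht.2, hx.2])))
    ((hcont.mono hsub).intervalIntegrable_of_Icc hx.1)]
  ring

namespace IsCapSol

variable {g σ ℓ γ P : ℝ} {ζ : ℝ → ℝ}

theorem contDiffOn_sinOfSlope_capD (hζ : IsCapSol g σ ℓ γ P ζ) (hℓ : 0 < ℓ) :
    ContDiffOn ℝ 1 (fun x => sinOfSlope (capD ℓ ζ x)) (Icc (-ℓ) ℓ) :=
  contDiff_sinOfSlope.comp_contDiffOn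
    (hζ.1.derivWithin (uniqueDiffOn_Icc (by linarith)) (by norm_num))

theorem integral_first_variation_eq (hζ : IsCapSol g σ ℓ γ P ζ) (hℓ : 0 < ℓ) {φ φ' : ℝ → ℝ}
    (hφ : IsW11 ℓ φ φ') (hφ_mass : ∫ x in (-ℓ)..ℓ, φ x = 0) :
    ∫ x in (-ℓ)..ℓ, (g * ζ x * φ x + σ * (sinOfSlope (capD ℓ ζ x) * φ' x)) =
      γ * (φ ℓ + φ (-ℓ)) := by
  have hF := hζ.contDiffOn_sinOfSlope_capD hℓ
  obtain ⟨hC2, hODE, hγ_right, hγ_left⟩ := hζ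
  have hℓ' : -ℓ ≤ ℓ := by linarith
  have hφ_cont := hφ.continuousOn hℓ.le
  have hφ'_int := hφ.intervalIntegrable hℓ.le
  have hH_cont : ContinuousOn (meanCurv ℓ ζ) (Icc (-ℓ) ℓ) :=
    hF.continuousOn_derivWithin (uniqueDiffOn_Icc (by linarith)) le_rfl
  have hHφ_int : IntervalIntegrable (fun x => meanCurv ℓ ζ x * φ x) volume (-ℓ) ℓ :=
    (hH_cont.mul hφ_cont).intervalIntegrable_of_Icc hℓ'
  have hζφ_int : IntervalIntegrable (fun x => g * ζ x * φ x) volume (-ℓ) ℓ :=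
    ((continuousOn_const.mul hC2.continuousOn).mul hφ_cont).intervalIntegrable_of_Icc hℓ'
  have hpressure : ∫ x in (-ℓ)..ℓ, g * ζ x * φ x = σ * ∫ x in (-ℓ)..ℓ, meanCurv ℓ ζ x * φ x :=
    calc ∫ x in (-ℓ)..ℓ, g * ζ x * φ x
        = ∫ x in (-ℓ)..ℓ, (P * φ x + σ * (meanCurv ℓ ζ x * φ x)) :=
          intervalIntegral.integral_congr_Ioo_of_le hℓ' fun x hx => by
            linear_combination φ x * hODE x hx
      _ = σ * ∫ x in (-ℓ)..ℓ, meanCurv ℓ ζ x * φ x := by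
        rw [intervalIntegral.integral_add ((hφ_cont.intervalIntegrable_of_Icc hℓ').const_mul P)
            (hHφ_int.const_mul σ),
          intervalIntegral.integral_const_mul, intervalIntegral.integral_const_mul, hφ_mass]
        ring
  have hparts : ∫ x in (-ℓ)..ℓ, sinOfSlope (capD ℓ ζ x) * φ' x =
      sinOfSlope (capD ℓ ζ ℓ) * φ ℓ - sinOfSlope (capD ℓ ζ (-ℓ)) * φ (-ℓ) -
        ∫ x in (-ℓ)..ℓ, meanCurv ℓ ζ x * φ x :=
    intervalIntegral.integral_mul_eq_sub_integral_derivWithin_mul hℓ' hF hφ'_int hφ.2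
  have hσF_right : σ * sinOfSlope (capD ℓ ζ ℓ) = γ := by rw [← hγ_right, mul_div_assoc]; rfl
  have hσF_left : σ * sinOfSlope (capD ℓ ζ (-ℓ)) = -γ := by rw [← hγ_left, mul_div_assoc]; rfl
  rw [intervalIntegral.integral_add hζφ_int
      ((hφ.intervalIntegrable_mul_deriv hℓ.le hF.continuousOn).const_mul σ),
    intervalIntegral.integral_const_mul, hpressure, hparts]
  linear_combination φ ℓ * hσF_right - φ (-ℓ) * hσF_left

end IsCapSol

/-- An equilibrium capillary surface minimizes the energy `𝓘`
among all `W^{1,1}` functions with the same total mass. -/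
theorem stmt5 (g σ ℓ γ P₀ : ℝ) (hg : 0 < g) (hσ : 0 < σ) (hℓ : 0 < ℓ)
    (ζ₀ : ℝ → ℝ) (hζ₀ : IsCapSol g σ ℓ γ P₀ ζ₀)
    (η η' : ℝ → ℝ) (hη : IsW11 ℓ η η')
    (hM : (∫ x in (-ℓ)..ℓ, η x) = ∫ x in (-ℓ)..ℓ, ζ₀ x) :
    capEnergy g σ ℓ γ ζ₀ (capD ℓ ζ₀) ≤ capEnergy g σ ℓ γ η η' := by
  have hℓ' : -ℓ ≤ ℓ := by linarith
  have hζ₀_W11 : IsW11 ℓ ζ₀ (capD ℓ ζ₀) := (hζ₀.1.of_le (by norm_num)).isW11 hℓ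
  have hφ : IsW11 ℓ (η - ζ₀) (η' - capD ℓ ζ₀) := hη.sub hζ₀_W11
  have hφ_mass : ∫ x in (-ℓ)..ℓ, (η x - ζ₀ x) = 0 := by
    rw [intervalIntegral.integral_sub ((hη.continuousOn hℓ.le).intervalIntegrable_of_Icc hℓ')
      (hζ₀.1.continuousOn.intervalIntegrable_of_Icc hℓ'), hM, sub_self]
  have hvar_int : IntervalIntegrable (fun x => g * ζ₀ x * (η - ζ₀) x +
      σ * (sinOfSlope (capD ℓ ζ₀ x) * (η' - capD ℓ ζ₀) x)) volume (-ℓ) ℓ :=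
    (((continuousOn_const.mul hζ₀.1.continuousOn).mul
      (hφ.continuousOn hℓ.le)).intervalIntegrable_of_Icc hℓ').add
        ((hφ.intervalIntegrable_mul_deriv hℓ.le
          (hζ₀.contDiffOn_sinOfSlope_capD hℓ).continuousOn).const_mul σ)
  have hmono := intervalIntegral.integral_mono_on hℓ'
    ((hζ₀_W11.intervalIntegrable_energyDensity hℓ.le g σ).add hvar_int)
    (hη.intervalIntegrable_energyDensity hℓ.le g σ) fun x _ =>
      energyDensity_add_variation_le hg.le hσ.le (ζ₀ x) (capD ℓ ζ₀ x) (η x) (η' x)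
  rw [intervalIntegral.integral_add (hζ₀_W11.intervalIntegrable_energyDensity hℓ.le g σ) hvar_int,
    hζ₀.integral_first_variation_eq hℓ hφ hφ_mass] at hmono
  simp only [capEnergy, Pi.sub_apply] at hmono ⊢
  linarith
end
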